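/- Let L ≥ 1, η, ξ₊, ξ₋ ∈ ℂ, and let x_1,…,x_L, z_1,…,z_L ∈ ℂ be nonzero with x_1²,…,x_L² pairwise distinct, z_1²,…,z_L² pairwise distinct, and (z_i ± η/2)² ≠ x_k² and (x_i ± η/2)² ≠ z_k² for all i,k (all four sign choices). Then the generalized Izergin determinant satisfies the symmetry I_{ξ₊,ξ₋}({z},{x}) = (−1)^L · I_{−ξ₊+η/2, −ξ₋+η/2}({x},{z}). -/
import Mathlib


open Finset

/-- The kernel `I_{ξ₊,ξ₋}(u,v)`. -/
noncomputable def Iker (η ξp ξm u v : ℂ) : ℂ :=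
  (u + ξp) * (u + ξm) / (u * ((u + η / 2) ^ 2 - v ^ 2))
    - (u - ξp) * (u - ξm) / (u * ((u - η / 2) ^ 2 - v ^ 2))

/-- The generalized Izergin determinant `I_{ξ₊,ξ₋}({u},{v})`. -/
noncomputable def IDet {L : ℕ} (η ξp ξm : ℂ) (u v : Fin L → ℂ) : ℂ :=
  ((∏ j, ∏ k, (u j ^ 2 - v k ^ 2)) /
      ∏ j, ∏ k ∈ Finset.Ioi j, ((u j ^ 2 - u k ^ 2) * (v k ^ 2 - v j ^ 2))) *
    Matrix.det (Matrix.of fun i j : Fin L => Iker η ξp ξm (u i) (v j))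

theorem stmt10 (L : ℕ) (hL : 1 ≤ L) (η ξp ξm : ℂ)
    (x z : Fin L → ℂ)
    (hx0 : ∀ i, x i ≠ 0) (hz0 : ∀ i, z i ≠ 0)
    (hx : ∀ i j, i ≠ j → x i ^ 2 ≠ x j ^ 2)
    (hz : ∀ i j, i ≠ j → z i ^ 2 ≠ z j ^ 2)
    (hzx : ∀ i k, (z i + η / 2) ^ 2 ≠ x k ^ 2 ∧ (z i - η / 2) ^ 2 ≠ x k ^ 2)
    (hxz : ∀ i k, (x i + η / 2) ^ 2 ≠ z k ^ 2 ∧ (x i - η / 2) ^ 2 ≠ z k ^ 2) :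
    IDet η ξp ξm z x
      = (-1 : ℂ) ^ L * IDet η (-ξp + η / 2) (-ξm + η / 2) x z := by
  have hker : ∀ u v : ℂ, u ≠ 0 → v ≠ 0 →
      (u + η / 2) ^ 2 - v ^ 2 ≠ 0 → (u - η / 2) ^ 2 - v ^ 2 ≠ 0 →
      (v + η / 2) ^ 2 - u ^ 2 ≠ 0 → (v - η / 2) ^ 2 - u ^ 2 ≠ 0 →
      Iker η ξp ξm u v = Iker η (-ξp + η / 2) (-ξm + η / 2) v u := by
    intro u v hu hv h1 h2 h3 h4
    have H1 : u * ((u + η / 2) ^ 2 - v ^ 2) ≠ 0 := mul_ne_zero hu h1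
    have H2 : u * ((u - η / 2) ^ 2 - v ^ 2) ≠ 0 := mul_ne_zero hu h2
    have H3 : v * ((v + η / 2) ^ 2 - u ^ 2) ≠ 0 := mul_ne_zero hv h3
    have H4 : v * ((v - η / 2) ^ 2 - u ^ 2) ≠ 0 := mul_ne_zero hv h4
    unfold Iker
    rw [div_sub_div _ _ H1 H2, div_sub_div _ _ H3 H4, div_eq_div_iff (mul_ne_zero H1 H2) (mul_ne_zero H3 H4)]
    ring
  -- The matrices
  have hmat : (Matrix.of fun i j : Fin L => Iker η ξp ξm (z i) (x j))
      = Matrix.transpose (Matrix.of fun i j : Fin L => Iker η (-ξp + η / 2) (-ξm + η / 2) (x i) (z j)) := by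
    ext i j
    simp only [Matrix.of_apply, Matrix.transpose_apply]
    exact hker (z i) (x j) (hz0 i) (hx0 j)
      (sub_ne_zero.mpr (hzx i j).1) (sub_ne_zero.mpr (hzx i j).2)
      (sub_ne_zero.mpr (hxz j i).1) (sub_ne_zero.mpr (hxz j i).2)
  have hdet : Matrix.det (Matrix.of fun i j : Fin L => Iker η ξp ξm (z i) (x j))
      = Matrix.det (Matrix.of fun i j : Fin L => Iker η (-ξp + η / 2) (-ξm + η / 2) (x i) (z j)) := by
    rw [hmat, Matrix.det_transpose]
  -- numerator
  have hnum : (∏ j, ∏ k, (z j ^ 2 - x k ^ 2))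
      = (-1 : ℂ) ^ L * ∏ j, ∏ k, (x j ^ 2 - z k ^ 2) := by
    calc (∏ j, ∏ k, (z j ^ 2 - x k ^ 2))
        = ∏ j, ∏ k, (-1 : ℂ) * (x k ^ 2 - z j ^ 2) := by
          apply Finset.prod_congr rfl; intro j _
          apply Finset.prod_congr rfl; intro k _; ring
      _ = (((-1 : ℂ) ^ L) ^ L) * ∏ j : Fin L, ∏ k : Fin L, (x k ^ 2 - z j ^ 2) := by
          simp only [Finset.prod_mul_distrib, Finset.prod_const, Finset.card_univ,
            Fintype.card_fin]
      _ = (((-1 : ℂ) ^ L) ^ L) * ∏ j : Fin L, ∏ k : Fin L, (x j ^ 2 - z k ^ 2) := by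
          rw [Finset.prod_comm]
      _ = (-1 : ℂ) ^ L * ∏ j, ∏ k, (x j ^ 2 - z k ^ 2) := by
          congr 1
          rcases Nat.even_or_odd L with h | h
          · simp [h.neg_one_pow]
          · simp [h.neg_one_pow]
  -- denominator
  have hden : (∏ j, ∏ k ∈ Finset.Ioi j, ((z j ^ 2 - z k ^ 2) * (x k ^ 2 - x j ^ 2)))
      = ∏ j, ∏ k ∈ Finset.Ioi j, ((x j ^ 2 - x k ^ 2) * (z k ^ 2 - z j ^ 2)) := by
    congr 1; ext j; congr 1; ext k; ring
  unfold IDet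
  rw [hdet, hnum, hden]
  ring
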